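/- Second pmf is valid: for natural numbers m ≤ ℓ ≤ C (C the capacity), ∑_{n=ℓ}^{C} C(Cap - n + m, Cap - n) * C(n - m, n - ℓ) / C(Cap, ℓ) = (Cap + 1)/(ℓ + 1), where Cap denotes the capacity parameter; equivalently ∑_{n=ℓ}^{Cap} C(Cap - n + m, Cap - n) * C(n - m, n - ℓ) = C(Cap + 1, ℓ + 1). -/

import Mathlib

/-!
Upper negation, `C(-(a+1), i) = (-1)^i C(a+i, a)`, turns the Chu–Vandermonde identity over `ℤ`
into `∑_{i+j=N} C(i+a, a) C(j+b, b) = C(N+a+b+1, a+b+1)`. The sum of the theorem is this identity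
for `a = m`, `b = ℓ - m`, `N = Cap - ℓ`, indexed by `i = Cap - n`, `j = n - ℓ`; dividing by
`C(Cap, ℓ)` uses `(Cap+1) C(Cap, ℓ) = (ℓ+1) C(Cap+1, ℓ+1)`.
-/

open Finset

theorem Ring.choose_neg_natCast_add_one (a i : ℕ) :
    Ring.choose (-((a + 1 : ℕ) : ℤ)) i = (-1) ^ i * ((a + i).choose a : ℤ) := by
  rw [Ring.choose_neg, Units.smul_def, Int.negOnePow_def, zpow_natCast, Nat.choose_symm_add,
    ← Ring.choose_natCast, smul_eq_mul, Units.val_pow_eq_pow_val, Units.val_neg, Units.val_one]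
  push_cast
  ring_nf

theorem Nat.sum_antidiagonal_add_choose_mul_add_choose (a b n : ℕ) :
    ∑ ij ∈ antidiagonal n, (ij.1 + a).choose a * (ij.2 + b).choose b
      = (n + a + b + 1).choose (a + b + 1) := by
  have h := Ring.add_choose_eq n (Commute.all (-((a + 1 : ℕ) : ℤ)) (-((b + 1 : ℕ) : ℤ)))
  rw [show -((a + 1 : ℕ) : ℤ) + -((b + 1 : ℕ) : ℤ) = -((a + b + 1 + 1 : ℕ) : ℤ) by push_cast; ring,
    Ring.choose_neg_natCast_add_one] at h
  have hsign : ∀ ij ∈ antidiagonal n,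
      Ring.choose (-((a + 1 : ℕ) : ℤ)) ij.1 * Ring.choose (-((b + 1 : ℕ) : ℤ)) ij.2
        = (-1) ^ n * (((ij.1 + a).choose a * (ij.2 + b).choose b : ℕ) : ℤ) := by
    rintro ⟨i, j⟩ hij
    rw [HasAntidiagonal.mem_antidiagonal] at hij
    rw [Ring.choose_neg_natCast_add_one, Ring.choose_neg_natCast_add_one, ← hij, pow_add]
    push_cast
    ring_nf
  rw [sum_congr rfl hsign, ← mul_sum] at h
  have hcancel := mul_left_cancel₀ (pow_ne_zero n (by norm_num : (-1 : ℤ) ≠ 0)) h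
  rw [show n + a + b + 1 = a + b + 1 + n by ring]
  exact_mod_cast hcancel.symm

theorem Finset.sum_Icc_eq_sum_antidiagonal {M : Type*} [AddCommMonoid M] (f : ℕ → ℕ → M)
    {ℓ N : ℕ} (h : ℓ ≤ N) :
    ∑ n ∈ Icc ℓ N, f (N - n) (n - ℓ) = ∑ ij ∈ antidiagonal (N - ℓ), f ij.1 ij.2 := by
  refine sum_nbij' (fun n ↦ (N - n, n - ℓ)) (fun ij ↦ ℓ + ij.2) ?_ ?_ ?_ ?_ (fun _ _ ↦ rfl)
  · intro n hn
    simp only [mem_Icc, HasAntidiagonal.mem_antidiagonal] at hn ⊢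
    omega
  · rintro ⟨i, j⟩ hij
    simp only [mem_Icc, HasAntidiagonal.mem_antidiagonal] at hij ⊢
    omega
  · intro n hn
    simp only [mem_Icc] at hn
    omega
  · rintro ⟨i, j⟩ hij
    simp only [HasAntidiagonal.mem_antidiagonal] at hij
    simp only [Prod.mk.injEq]
    omega

theorem stmt_11 (Cap ℓ m : ℕ) (hm : m ≤ ℓ) (hℓ : ℓ ≤ Cap) :
    (∑ n ∈ Finset.Icc ℓ Cap,
        (((Cap - n + m).choose (Cap - n) * (n - m).choose (n - ℓ) : ℚ)
          / (Cap.choose ℓ : ℚ))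
      = ((Cap : ℚ) + 1) / ((ℓ : ℚ) + 1))
    ∧ ∑ n ∈ Finset.Icc ℓ Cap,
        (Cap - n + m).choose (Cap - n) * (n - m).choose (n - ℓ)
      = (Cap + 1).choose (ℓ + 1) := by
  have hnat : ∑ n ∈ Icc ℓ Cap, (Cap - n + m).choose (Cap - n) * (n - m).choose (n - ℓ)
      = (Cap + 1).choose (ℓ + 1) := by
    have hterm : ∀ n ∈ Icc ℓ Cap, (Cap - n + m).choose (Cap - n) * (n - m).choose (n - ℓ)
        = (Cap - n + m).choose m * (n - ℓ + (ℓ - m)).choose (ℓ - m) := by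
      intro n hn
      rw [mem_Icc] at hn
      rw [Nat.choose_symm_add, show n - m = n - ℓ + (ℓ - m) by omega, Nat.choose_symm_add]
    rw [sum_congr rfl hterm,
      sum_Icc_eq_sum_antidiagonal (fun i j ↦ (i + m).choose m * (j + (ℓ - m)).choose (ℓ - m)) hℓ,
      Nat.sum_antidiagonal_add_choose_mul_add_choose]
    congr 1 <;> omega
  refine ⟨?_, hnat⟩
  have hchoose : (Cap.choose ℓ : ℚ) ≠ 0 := by exact_mod_cast (Nat.choose_pos hℓ).ne'
  rw [← sum_div, div_eq_div_iff hchoose (by positivity)]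
  exact_mod_cast (congrArg (· * (ℓ + 1)) hnat).trans (Nat.add_one_mul_choose_eq Cap ℓ).symm
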